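/- arXiv:0803.0491 — 2 statements merged into one kernel-verified Lean document; each statement's English description precedes it below -/
import Mathlib

section
/- Let x = (a_1,...,a_n) and y = (b_1,...,b_n) be rook-monoid sequences with indices i < j such that b_i = a_j, b_j = a_i, b_j < b_i, and a_k = b_k for all k ∉ {i,j}. Then ℓ(y) = ℓ(x) + 1 if and only if y covers x in the Deodhar order. -/
/-- coinv: number of pairs i < j with 0 < a i < a j. -/
def coinv (n : ℕ) (a : Fin n → ℕ) : ℕ :=
  (Finset.univ.filter (fun p : Fin n × Fin n => p.1 < p.2 ∧ 0 < a p.1 ∧ a p.1 < a p.2)).card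

/-- Length of a rook-monoid sequence: ∑_{i : a_i ≠ 0} (a_i + n - i) - coinv (1-based i). -/
def rookLen (n : ℕ) (a : Fin n → ℕ) : ℤ :=
  (∑ i : Fin n, if a i ≠ 0 then ((a i : ℤ) + n - (i.val + 1)) else 0) - coinv n a

/-- A rook-monoid sequence: entries in {0,...,n} with distinct nonzero entries. -/
def IsRook (n : ℕ) (a : Fin n → ℕ) : Prop :=
  (∀ i, a i ≤ n) ∧ ∀ i j : Fin n, i ≠ j → a i ≠ 0 → a i ≠ a j

/-- Non-increasing rearrangement of a list. -/
def sortDesc (l : List ℕ) : List ℕ := l.insertionSort (· ≥ ·)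

/-- Containment order: entrywise comparison of non-increasing rearrangements. -/
def contLE (l m : List ℕ) : Prop := List.Forall₂ (· ≤ ·) (sortDesc l) (sortDesc m)

/-- Deodhar order: containment of all truncations. -/
def deodharLE (n : ℕ) (x y : Fin n → ℕ) : Prop :=
  ∀ k : ℕ, k ≤ n → contLE ((List.ofFn x).take k) ((List.ofFn y).take k)

/-- y covers x in the Deodhar order on rook-monoid sequences. -/
def deodharCovers (n : ℕ) (x y : Fin n → ℕ) : Prop :=
  deodharLE n x y ∧ x ≠ y ∧
    ¬∃ z : Fin n → ℕ, IsRook n z ∧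
      deodharLE n x z ∧ x ≠ z ∧ deodharLE n z y ∧ z ≠ y


/-!
Write `b = a ∘ (i j)` with `a i < a j`. Since `n - (p + 1)` counts the positions after `p`,
`ℓ(x) = ∑ x p + #{p < q | x p ≠ 0 ∧ x q ≤ x p}`, and transposing `i, j` changes the pair count by
`1 + ∑_{i<k<j} w k`, where `w k ≥ 0` vanishes exactly when `a k` lies outside `[a i, a j]`.

The Deodhar order compares the rank counts `r x k q = #{p < k | q ≤ x p}`, and `r b = r a + 1` on
the window `(i, j] × (a i, a j]` and `r b = r a` elsewhere. If some `a k` with `i < k < j` lies in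
`[a i, a j)`, transposing `k, j` instead gives an element strictly between `a` and `b`. Otherwise
every `z` with `r a ≤ r z ≤ r b` agrees with `a` off positions `i, j`, and the counts in rows `i`
and `j + 1` force `{z i, z j} = {a i, a j}`, so `z = a` or `z = b`.
-/

namespace List

theorem countP_ge_le_of_forall₂_le {l m : List ℕ} (h : Forall₂ (· ≤ ·) l m) (q : ℕ) :
    l.countP (q ≤ ·) ≤ m.countP (q ≤ ·) := by
  induction h with
  | nil => rfl
  | cons hab _ ih =>
    simp only [countP_cons, decide_eq_true_eq]
    split_ifs <;> omega

theorem forall₂_le_of_countP_ge_le {l m : List ℕ} (hl : l.Pairwise (· ≥ ·))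
    (hm : m.Pairwise (· ≥ ·)) (hlen : l.length = m.length)
    (h : ∀ q, l.countP (q ≤ ·) ≤ m.countP (q ≤ ·)) : Forall₂ (· ≤ ·) l m := by
  induction l generalizing m with
  | nil => cases m with
    | nil => exact .nil
    | cons => simp at hlen
  | cons x xs ih => cases m with
    | nil => simp at hlen
    | cons y ys =>
      rw [pairwise_cons] at hl hm
      have hxy : x ≤ y := by
        obtain ⟨w, hw, hxw⟩ := countP_pos_iff.mp <|
          (countP_pos_iff.mpr ⟨x, mem_cons_self, by simp⟩).trans_le (h x)
        simp only [decide_eq_true_eq] at hxw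
        rcases mem_cons.mp hw with rfl | hw
        exacts [hxw, hxw.trans (hm.1 w hw)]
      refine .cons hxy (ih hl.2 hm.2 (by simpa using hlen) fun q => ?_)
      have hq := h q
      simp only [countP_cons, decide_eq_true_eq] at hq
      by_cases hqx : q ≤ x
      · simp only [hqx, hqx.trans hxy, if_true] at hq
        omega
      · have : xs.countP (q ≤ ·) = 0 := countP_eq_zero.mpr fun w hw hqw =>
          hqx (by simpa using (of_decide_eq_true hqw).trans (hl.1 w hw))
        omega

end List

theorem contLE_iff_countP_ge_le {l m : List ℕ} (hlen : l.length = m.length) :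
    contLE l m ↔ ∀ q, l.countP (q ≤ ·) ≤ m.countP (q ≤ ·) := by
  have hperm (l : List ℕ) : (sortDesc l).Perm l := List.perm_insertionSort _ l
  constructor
  · intro h q
    simpa only [(hperm l).countP_eq, (hperm m).countP_eq] using
      List.countP_ge_le_of_forall₂_le h q
  · intro h
    refine List.forall₂_le_of_countP_ge_le (List.pairwise_insertionSort _ l)
      (List.pairwise_insertionSort _ m) ?_ fun q => ?_
    · rw [(hperm l).length_eq, (hperm m).length_eq, hlen]
    · simpa only [(hperm l).countP_eq, (hperm m).countP_eq] using h q

theorem Function.eq_comp_swap_of_apply {α β : Type*} [DecidableEq α] {f g : α → β} {i j : α}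
    (hi : g i = f j) (hj : g j = f i) (h : ∀ k, k ≠ i → k ≠ j → g k = f k) :
    g = f ∘ Equiv.swap i j := by
  funext k
  by_cases hki : k = i
  · rw [hki, hi, Function.comp_apply, Equiv.swap_apply_left]
  by_cases hkj : k = j
  · rw [hkj, hj, Function.comp_apply, Equiv.swap_apply_right]
  rw [Function.comp_apply, Equiv.swap_apply_of_ne_of_ne hki hkj, h k hki hkj]

theorem eq_and_eq_or_of_ite_le_add_eq {u v s t : ℕ} (hu : s ≤ u ∧ u ≤ t) (hv : s ≤ v ∧ v ≤ t)
    (h : ∀ q, ((if q ≤ u then 1 else 0) + if q ≤ v then 1 else 0) =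
      ((if q ≤ s then 1 else 0) + if q ≤ t then 1 else 0 : ℕ)) :
    u = s ∧ v = t ∨ u = t ∧ v = s := by
  have h₁ := h t
  have h₂ := h (s + 1)
  split_ifs at h₁ h₂ <;> omega

section RankCount

variable {n : ℕ}

def rankCount (x : Fin n → ℕ) (k q : ℕ) : ℕ := ((List.ofFn x).take k).countP (q ≤ ·)

theorem rankCount_succ (x : Fin n → ℕ) (p : Fin n) (q : ℕ) :
    rankCount x (p + 1) q = rankCount x p q + if q ≤ x p then 1 else 0 := by
  simp [rankCount, List.take_add_one, List.countP_append]

theorem deodharLE_iff_rankCount_le (x y : Fin n → ℕ) :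
    deodharLE n x y ↔ ∀ k ≤ n, ∀ q, rankCount x k q ≤ rankCount y k q :=
  forall₂_congr fun _ _ => contLE_iff_countP_ge_le (by simp)

theorem rankCount_add_eq_of_eqOn {x y : Fin n → ℕ} {k m : ℕ} (hkm : k ≤ m) (hm : m ≤ n)
    (h : ∀ p : Fin n, k ≤ p → (p : ℕ) < m → x p = y p) (q : ℕ) :
    rankCount x m q + rankCount y k q = rankCount y m q + rankCount x k q := by
  induction m, hkm using Nat.le_induction with
  | base => omega
  | succ m hkm ih =>
    have hxy := h ⟨m, hm⟩ hkm (Nat.lt_succ_self m)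
    have hx := rankCount_succ x ⟨m, hm⟩ q
    have hy := rankCount_succ y ⟨m, hm⟩ q
    simp only [hxy] at hx hy
    have := ih (by omega) fun p hkp hpm => h p hkp (by omega)
    omega

theorem le_iff_le_of_rankCount_eq {x y : Fin n → ℕ} {p : Fin n} {q : ℕ}
    (h₀ : rankCount x p q = rankCount y p q)
    (h₁ : rankCount x (p + 1) q = rankCount y (p + 1) q) : q ≤ x p ↔ q ≤ y p := by
  rw [rankCount_succ, rankCount_succ] at h₁
  constructor <;> intro h <;> by_contra h' <;> simp only [h, h', if_true, if_false] at h₁ <;> omega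

theorem apply_eq_of_rankCount_eq_off_window {x y : Fin n → ℕ} {r₁ r₂ s t : ℕ}
    (hxy : ∀ k ≤ n, ∀ q, ¬(r₁ < k ∧ k ≤ r₂ ∧ s < q ∧ q ≤ t) → rankCount x k q = rankCount y k q)
    {p : Fin n} (hp : y p < s ∨ t < y p ∨ (p : ℕ) < r₁ ∨ r₂ < p) : x p = y p := by
  have hrow (q : ℕ) (hq : q = y p ∨ q = y p + 1) : q ≤ x p ↔ q ≤ y p :=
    le_iff_le_of_rankCount_eq (hxy _ p.isLt.le q (by omega)) (hxy _ p.isLt q (by omega))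
  have h₀ := (hrow (y p) (.inl rfl)).2 le_rfl
  have h₁ := (hrow (y p + 1) (.inr rfl)).not.2 (by omega)
  omega

theorem rankCount_comp_swap {x : Fin n → ℕ} {i j : Fin n} (hij : i < j) (hx : x i ≤ x j)
    {k : ℕ} (hk : k ≤ n) (q : ℕ) :
    rankCount (x ∘ Equiv.swap i j) k q =
      rankCount x k q + if (i : ℕ) < k ∧ k ≤ j ∧ x i < q ∧ q ≤ x j then 1 else 0 := by
  induction k with
  | zero => simp [rankCount]
  | succ k ih =>
    obtain ⟨p, rfl⟩ : ∃ p : Fin n, (p : ℕ) = k := ⟨⟨k, hk⟩, rfl⟩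
    have hij' : (i : ℕ) < j := hij
    rw [rankCount_succ, rankCount_succ, ih (by omega), Function.comp_apply]
    rcases eq_or_ne p i with rfl | hpi
    · rw [Equiv.swap_apply_left]
      split_ifs <;> omega
    rcases eq_or_ne p j with rfl | hpj
    · rw [Equiv.swap_apply_right]
      split_ifs <;> omega
    · rw [Equiv.swap_apply_of_ne_of_ne hpi hpj]
      have hpi' : (p : ℕ) ≠ i := Fin.val_ne_of_ne hpi
      have hpj' : (p : ℕ) ≠ j := Fin.val_ne_of_ne hpj
      split_ifs <;> omega

theorem rankCount_eq_off_window_of_between {a z : Fin n → ℕ} {i j : Fin n} (hij : i < j)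
    (hst : a i ≤ a j) (hlo : ∀ k ≤ n, ∀ q, rankCount a k q ≤ rankCount z k q)
    (hhi : ∀ k ≤ n, ∀ q, rankCount z k q ≤ rankCount (a ∘ Equiv.swap i j) k q) :
    ∀ k ≤ n, ∀ q, ¬((i : ℕ) < k ∧ k ≤ j ∧ a i < q ∧ q ≤ a j) →
      rankCount z k q = rankCount a k q := by
  intro k hk q hq
  have := hhi k hk q
  rw [rankCount_comp_swap hij hst hk, if_neg hq] at this
  exact this.antisymm (hlo k hk q)

theorem eq_or_eq_comp_swap_of_rankCount_between {a z : Fin n → ℕ} {i j : Fin n}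
    (hij : i < j) (hst : a i < a j) (hgap : ∀ k, i < k → k < j → a k < a i ∨ a j < a k)
    (hlo : ∀ k ≤ n, ∀ q, rankCount a k q ≤ rankCount z k q)
    (hhi : ∀ k ≤ n, ∀ q, rankCount z k q ≤ rankCount (a ∘ Equiv.swap i j) k q) :
    z = a ∨ z = a ∘ Equiv.swap i j := by
  have hij' : (i : ℕ) < j := hij
  have hout := rankCount_eq_off_window_of_between hij hst.le hlo hhi
  have hoff (p : Fin n) (hpi : p ≠ i) (hpj : p ≠ j) : z p = a p := by
    refine apply_eq_of_rankCount_eq_off_window hout ?_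
    rcases lt_or_gt_of_ne hpi with h | h
    · exact .inr (.inr (.inl h))
    rcases lt_or_gt_of_ne hpj with h' | h'
    · exact (hgap p h h').imp_right .inl
    · exact .inr (.inr (.inr h'))
  have hmid := rankCount_add_eq_of_eqOn (x := z) (y := a) (by omega : (i : ℕ) + 1 ≤ j)
    j.isLt.le fun p hip hpj => hoff p (by rintro rfl; omega) (by rintro rfl; omega)
  have hpair (q : ℕ) : ((if q ≤ z i then 1 else 0) + if q ≤ z j then 1 else 0) =
      ((if q ≤ a i then 1 else 0) + if q ≤ a j then 1 else 0 : ℕ) := by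
    have := hmid q
    have := rankCount_succ z i q
    have := rankCount_succ a i q
    have := rankCount_succ z j q
    have := rankCount_succ a j q
    have := hout i i.isLt.le q (by omega)
    have := hout (j + 1) j.isLt q (by omega)
    omega
  have hrow (p : Fin n) (q : ℕ) (hq : q ≤ a i ∨ a j < q) : q ≤ z p ↔ q ≤ a p :=
    le_iff_le_of_rankCount_eq (hout _ p.isLt.le q (by omega)) (hout _ p.isLt q (by omega))
  have hzi := (hrow i (a j + 1) (.inr (by omega))).not.2 (by omega)
  have hzj := (hrow j (a j + 1) (.inr (by omega))).not.2 (by omega)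
  rcases eq_and_eq_or_of_ite_le_add_eq ⟨(hrow i (a i) (.inl le_rfl)).2 le_rfl, by omega⟩
    ⟨(hrow j (a i) (.inl le_rfl)).2 hst.le, by omega⟩ hpair with ⟨hi, hj⟩ | ⟨hi, hj⟩
  · refine .inl (funext fun p => ?_)
    by_cases hpi : p = i
    · rw [hpi, hi]
    by_cases hpj : p = j
    · rw [hpj, hj]
    exact hoff p hpi hpj
  · exact .inr (Function.eq_comp_swap_of_apply hi hj hoff)

end RankCount

theorem Finset.sum_sum_eq_of_eq_zero_off {ι M : Type*} [Fintype ι] [DecidableEq ι]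
    [AddCommMonoid M] (S : Finset ι) (h : ι → ι → M) (hS : ∀ p ∉ S, ∀ q ∉ S, h p q = 0) :
    ∑ p, ∑ q, h p q = ∑ p ∈ S, ∑ q ∈ S, h p q + ∑ q ∈ Sᶜ, ∑ p ∈ S, (h p q + h q p) := by
  have hout : ∀ p ∈ Sᶜ, ∑ q, h p q = ∑ q ∈ S, h p q := fun p hp => by
    rw [← Finset.sum_add_sum_compl S, Finset.sum_eq_zero fun q hq =>
      hS p (Finset.mem_compl.mp hp) q (Finset.mem_compl.mp hq), add_zero]
  rw [← Finset.sum_add_sum_compl S, Finset.sum_congr rfl hout]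
  simp only [← Finset.sum_add_sum_compl S (h _), Finset.sum_add_distrib]
  rw [Finset.sum_comm (s := S) (t := Sᶜ), add_assoc]

def pairSum {ι α M : Type*} [Fintype ι] [LinearOrder ι] [AddCommMonoid M] (F : α → α → M)
    (x : ι → α) : M :=
  ∑ p, ∑ q, if p < q then F (x p) (x q) else 0

theorem pairSum_comp_swap {ι α M : Type*} [Fintype ι] [LinearOrder ι] [LocallyFiniteOrder ι]
    [AddCommGroup M] (F : α → α → M) (x : ι → α) {i j : ι} (hij : i < j) :
    pairSum F (x ∘ Equiv.swap i j) = pairSum F x + (F (x j) (x i) - F (x i) (x j)) +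
      ∑ k ∈ Finset.Ioo i j, (F (x j) (x k) + F (x k) (x i) - F (x i) (x k) - F (x k) (x j)) := by
  classical
  set S : Finset ι := {i, j}
  have hS : ∀ p ∉ S, Equiv.swap i j p = p := fun p hp => by
    simp only [S, Finset.mem_insert, Finset.mem_singleton, not_or] at hp
    exact Equiv.swap_apply_of_ne_of_ne hp.1 hp.2
  rw [add_assoc, ← sub_eq_iff_eq_add', pairSum, pairSum, ← Finset.sum_sub_distrib]
  simp only [← Finset.sum_sub_distrib]
  rw [Finset.sum_sum_eq_of_eq_zero_off S _ fun p hp q hq => by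
    simp only [Function.comp_apply, hS p hp, hS q hq, sub_self]]
  have hIoo : Finset.Ioo i j ⊆ Sᶜ := fun k hk => by
    rw [Finset.mem_Ioo] at hk
    simp [S, hk.1.ne', hk.2.ne]
  rw [← Finset.sum_subset hIoo, Finset.sum_pair hij.ne, Finset.sum_pair hij.ne,
    Finset.sum_pair hij.ne]
  · simp only [Function.comp_apply, Equiv.swap_apply_left, Equiv.swap_apply_right, lt_irrefl,
      hij, not_lt.mpr hij.le, if_true, if_false, sub_self, zero_add, add_zero]
    congr 1
    refine Finset.sum_congr rfl fun k hk => ?_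
    rw [Finset.mem_Ioo] at hk
    rw [Finset.sum_pair hij.ne]
    simp only [hS k (Finset.mem_compl.mp (hIoo (Finset.mem_Ioo.mpr hk))), Equiv.swap_apply_left,
      Equiv.swap_apply_right, hk.1, hk.2, not_lt.mpr hk.1.le, not_lt.mpr hk.2.le, if_true,
      if_false, sub_zero]
    abel
  · intro k hkS hk
    rw [Finset.mem_compl] at hkS
    rw [Finset.mem_Ioo, not_and_or, not_lt, not_lt] at hk
    have hki : k ≠ i := fun h => hkS (by simp [S, h])
    have hkj : k ≠ j := fun h => hkS (by simp [S, h])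
    rw [Finset.sum_pair hij.ne]
    simp only [Function.comp_apply, hS k hkS, Equiv.swap_apply_left, Equiv.swap_apply_right]
    rcases hk with hk | hk <;> split_ifs <;> first | (exfalso; order) | abel

def weakDescent (u v : ℕ) : ℤ := if u ≠ 0 ∧ v ≤ u then 1 else 0

theorem rookLen_eq_sum_add_pairSum {n : ℕ} (x : Fin n → ℕ) :
    rookLen n x = ∑ p, (x p : ℤ) + pairSum weakDescent x := by
  have hcoinv : (coinv n x : ℤ) =
      ∑ p, ∑ q, if p < q then (if 0 < x p ∧ x p < x q then 1 else 0) else 0 := by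
    rw [coinv, Finset.card_filter, Fintype.sum_prod_type]
    push_cast
    simp only [ite_and]
  have hlater (p : Fin n) : (n : ℤ) - (p + 1) = ∑ q, if p < q then 1 else 0 := by
    rw [Finset.sum_boole, Finset.filter_lt_eq_Ioi, Fin.card_Ioi]
    omega
  rw [rookLen, hcoinv, pairSum, sub_eq_iff_eq_add, ← Finset.sum_add_distrib,
    ← Finset.sum_add_distrib]
  refine Finset.sum_congr rfl fun p _ => ?_
  rw [add_assoc, ← Finset.sum_add_distrib]
  split_ifs with hp
  · rw [add_sub_assoc, hlater p]
    congr 1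
    refine Finset.sum_congr rfl fun q _ => ?_
    unfold weakDescent
    split_ifs <;> omega
  · simp [weakDescent, not_not.mp hp]

theorem weakDescent_change_nonneg {s t u : ℕ} (hst : s < t) :
    0 ≤ weakDescent t u + weakDescent u s - weakDescent s u - weakDescent u t := by
  unfold weakDescent
  split_ifs <;> omega

theorem weakDescent_change_eq_zero_iff {s t u : ℕ} (hst : s < t) :
    weakDescent t u + weakDescent u s - weakDescent s u - weakDescent u t = 0 ↔
      u < s ∨ t < u := by
  unfold weakDescent
  split_ifs <;> omega

theorem rookLen_comp_swap {n : ℕ} {x : Fin n → ℕ} {i j : Fin n} (hij : i < j) (hst : x i < x j) :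
    rookLen n (x ∘ Equiv.swap i j) = rookLen n x + 1 + ∑ k ∈ Finset.Ioo i j,
      (weakDescent (x j) (x k) + weakDescent (x k) (x i) - weakDescent (x i) (x k) -
        weakDescent (x k) (x j)) := by
  have hji : weakDescent (x j) (x i) = 1 := if_pos ⟨by omega, hst.le⟩
  have hij' : weakDescent (x i) (x j) = 0 := if_neg (by omega)
  rw [rookLen_eq_sum_add_pairSum, rookLen_eq_sum_add_pairSum, pairSum_comp_swap _ _ hij, hji,
    hij']
  simp only [Function.comp_apply, Equiv.sum_comp (Equiv.swap i j) (fun p => (x p : ℤ))]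
  ring

theorem rookLen_comp_swap_eq_add_one_iff {n : ℕ} {x : Fin n → ℕ} {i j : Fin n} (hij : i < j)
    (hst : x i < x j) :
    rookLen n (x ∘ Equiv.swap i j) = rookLen n x + 1 ↔
      ∀ k, i < k → k < j → x k < x i ∨ x j < x k := by
  rw [rookLen_comp_swap hij hst, add_eq_left,
    Finset.sum_eq_zero_iff_of_nonneg fun k _ => weakDescent_change_nonneg hst]
  simp only [Finset.mem_Ioo, and_imp]
  exact forall₃_congr fun _ _ _ => weakDescent_change_eq_zero_iff hst

theorem IsRook.comp_perm {n : ℕ} {x : Fin n → ℕ} (hx : IsRook n x) (σ : Equiv.Perm (Fin n)) :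
    IsRook n (x ∘ σ) :=
  ⟨fun _ => hx.1 _, fun _ _ hpr h0 => hx.2 _ _ (σ.injective.ne hpr) h0⟩

theorem deodharLE_comp_swap {n : ℕ} {x : Fin n → ℕ} {i j : Fin n} (hij : i < j)
    (hx : x i ≤ x j) : deodharLE n x (x ∘ Equiv.swap i j) :=
  (deodharLE_iff_rankCount_le _ _).2 fun _ hk q => by
    rw [rankCount_comp_swap hij hx hk]
    exact Nat.le_add_right _ _

theorem deodharCovers_comp_swap_iff {n : ℕ} {a : Fin n → ℕ} (ha : IsRook n a) {i j : Fin n}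
    (hij : i < j) (hst : a i < a j) :
    deodharCovers n a (a ∘ Equiv.swap i j) ↔ ∀ k, i < k → k < j → a k < a i ∨ a j < a k := by
  constructor
  · intro hcov
    by_contra! hk
    obtain ⟨k, hik, hkj, hik', hkj'⟩ := hk
    have hkj'' : a k < a j := lt_of_le_of_ne hkj' (ha.2 j k hkj.ne' (by omega)).symm
    -- The window `(k, j] × (a k, a j]` of this transposition lies inside `(i, j] × (a i, a j]`.
    refine hcov.2.2 ⟨a ∘ Equiv.swap k j, ha.comp_perm _, deodharLE_comp_swap hkj hkj''.le,
      fun h => ?_, (deodharLE_iff_rankCount_le _ _).2 fun m hm q => ?_, fun h => ?_⟩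
    · have := congrFun h k
      simp only [Function.comp_apply, Equiv.swap_apply_left] at this
      omega
    · have hik : (i : ℕ) < k := hik
      rw [rankCount_comp_swap hkj hkj''.le hm, rankCount_comp_swap hij hst.le hm]
      split_ifs <;> omega
    · have := congrFun h i
      simp only [Function.comp_apply, Equiv.swap_apply_left,
        Equiv.swap_apply_of_ne_of_ne hik.ne hij.ne] at this
      omega
  · intro hgap
    refine ⟨deodharLE_comp_swap hij hst.le, fun h => ?_, ?_⟩
    · have := congrFun h i
      simp only [Function.comp_apply, Equiv.swap_apply_left] at this
      omega
    · rintro ⟨z, -, haz, haz', hzb, hzb'⟩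
      rcases eq_or_eq_comp_swap_of_rankCount_between hij hst hgap
        ((deodharLE_iff_rankCount_le _ _).1 haz) ((deodharLE_iff_rankCount_le _ _).1 hzb)
        with rfl | rfl
      exacts [haz' rfl, hzb' rfl]

theorem swap_len_iff_covers_general (n : ℕ) (a b : Fin n → ℕ) (ha : IsRook n a)
    (i j : Fin n) (hij : i < j) (h1 : b i = a j) (h2 : b j = a i) (h3 : b j < b i)
    (hne : ∀ k, k ≠ i → k ≠ j → a k = b k) :
    rookLen n b = rookLen n a + 1 ↔ deodharCovers n a b := by
  have hst : a i < a j := h1 ▸ h2 ▸ h3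
  have hb : b = a ∘ Equiv.swap i j :=
    Function.eq_comp_swap_of_apply h1 h2 fun k hki hkj => (hne k hki hkj).symm
  rw [hb, rookLen_comp_swap_eq_add_one_iff hij hst, deodharCovers_comp_swap_iff ha hij hst]

theorem swap_len_iff_covers (n : ℕ) (a b : Fin n → ℕ) (ha : IsRook n a) (hb : IsRook n b)
    (i j : Fin n) (hij : i < j) (h1 : b i = a j) (h2 : b j = a i) (h3 : b j < b i)
    (hne : ∀ k, k ≠ i → k ≠ j → a k = b k) :
    rookLen n b = rookLen n a + 1 ↔ deodharCovers n a b :=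
  swap_len_iff_covers_general n a b ha i j hij h1 h2 h3 hne
end

section
/- The Pennell-Putcha-Renner order ≤_PPR on rook-monoid sequences (the transitive closure of the two elementary moves: increasing a single entry, or swapping two entries a_i < a_j with i < j to put the larger one first) coincides with the Deodhar order ≤_D defined via containment of truncations. -/
/-- An elementary Pennell-Putcha-Renner move: raise one entry, or swap two entries
to put the larger one first. -/
def pprStep (n : ℕ) (x y : Fin n → ℕ) : Prop :=
  (∃ i : Fin n, x i < y i ∧ ∀ k, k ≠ i → x k = y k) ∨
  (∃ i j : Fin n, i < j ∧ y i = x j ∧ y j = x i ∧ x i < x j ∧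
    ∀ k, k ≠ i → k ≠ j → x k = y k)


/-- counting function: number of positions p < k with u p ≥ t. -/
def cnt (n k t : ℕ) (u : Fin n → ℕ) : ℕ :=
  (Finset.univ.filter fun p : Fin n => p.val < k ∧ t ≤ u p).card

def DLE (n : ℕ) (x y : Fin n → ℕ) : Prop := ∀ k t : ℕ, cnt n k t x ≤ cnt n k t y

lemma cnt_eq_of_agree {n k t : ℕ} {u w : Fin n → ℕ}
    (h : ∀ p : Fin n, p.val < k → u p = w p) : cnt n k t u = cnt n k t w := by
  unfold cnt
  congr 1
  apply Finset.filter_congr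
  intro p _
  constructor
  · rintro ⟨h1, h2⟩; exact ⟨h1, (h p h1) ▸ h2⟩
  · rintro ⟨h1, h2⟩; exact ⟨h1, (h p h1).symm ▸ h2⟩

lemma cnt_le_of_pointwise {n k t : ℕ} {u w : Fin n → ℕ}
    (h : ∀ p : Fin n, p.val < k → u p ≤ w p) : cnt n k t u ≤ cnt n k t w := by
  apply Finset.card_le_card
  intro p hp
  simp only [Finset.mem_filter, Finset.mem_univ, true_and] at hp ⊢
  exact ⟨hp.1, le_trans hp.2 (h p hp.1)⟩

lemma cnt_stable {n k t : ℕ} (u : Fin n → ℕ) (hk : n ≤ k) : cnt n k t u = cnt n n t u := by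
  unfold cnt
  congr 1
  apply Finset.filter_congr
  intro p _
  have := p.isLt
  constructor
  · rintro ⟨_, h2⟩; exact ⟨this, h2⟩
  · rintro ⟨_, h2⟩; exact ⟨lt_of_lt_of_le this hk, h2⟩

/-- split the count at position i. -/
lemma cnt_split {n k t : ℕ} (u : Fin n → ℕ) (i : Fin n) (hik : i.val < k) :
    cnt n k t u =
      ((Finset.univ.filter fun p : Fin n => p.val < i.val ∧ t ≤ u p).card
        + (if t ≤ u i then 1 else 0))
        + (Finset.univ.filter fun p : Fin n => i.val < p.val ∧ p.val < k ∧ t ≤ u p).card := by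
  classical
  unfold cnt
  rw [Finset.card_filter, Finset.card_filter, Finset.card_filter]
  have hpt : ∀ p : Fin n, (if p.val < k ∧ t ≤ u p then 1 else 0) =
      ((if p.val < i.val ∧ t ≤ u p then 1 else 0)
        + (if p = i then (if t ≤ u p then 1 else 0) else 0))
        + (if i.val < p.val ∧ p.val < k ∧ t ≤ u p then 1 else 0) := by
    intro p
    have hiff : (p = i) ↔ (p.val = i.val) := ⟨fun h => h ▸ rfl, fun h => Fin.ext h⟩
    simp only [hiff]
    split_ifs <;> omega
  rw [Finset.sum_congr rfl (fun p _ => hpt p)]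
  rw [Finset.sum_add_distrib, Finset.sum_add_distrib]
  rw [Finset.sum_ite_eq' Finset.univ i (fun p => if t ≤ u p then 1 else 0)]
  simp

lemma cnt_succ {n k t : ℕ} (u : Fin n → ℕ) (hk : k < n) :
    cnt n (k+1) t u = cnt n k t u + (if t ≤ u ⟨k, hk⟩ then 1 else 0) := by
  have h := cnt_split (t := t) u ⟨k, hk⟩ (Nat.lt_succ_self k)
  have hmid : (Finset.univ.filter fun p : Fin n =>
      (⟨k, hk⟩ : Fin n).val < p.val ∧ p.val < k + 1 ∧ t ≤ u p) = ∅ := by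
    apply Finset.filter_false_of_mem
    intro p _
    rintro ⟨h1, h2, _⟩
    simp only [Fin.val_mk] at h1
    omega
  rw [hmid] at h
  simpa [cnt] using h

lemma swap_val_lt {n k : ℕ} (i j p : Fin n) (hi : i.val < k) (hj : j.val < k)
    (hp : p.val < k) : ((Equiv.swap i j) p).val < k := by
  rcases eq_or_ne p i with rfl | hpi
  · rw [Equiv.swap_apply_left]; exact hj
  rcases eq_or_ne p j with rfl | hpj
  · rw [Equiv.swap_apply_right]; exact hi
  · rw [Equiv.swap_apply_of_ne_of_ne hpi hpj]; exact hp

lemma cnt_swap {n k t : ℕ} (u : Fin n → ℕ) (i j : Fin n) (hi : i.val < k) (hj : j.val < k) :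
    cnt n k t (u ∘ (Equiv.swap i j)) = cnt n k t u := by
  classical
  unfold cnt
  apply Finset.card_bij' (fun p _ => (Equiv.swap i j) p) (fun p _ => (Equiv.swap i j) p)
  · intro p hp
    simp only [Finset.mem_filter, Finset.mem_univ, true_and, Function.comp] at hp ⊢
    exact ⟨swap_val_lt i j p hi hj hp.1, hp.2⟩
  · intro p hp
    simp only [Finset.mem_filter, Finset.mem_univ, true_and, Function.comp] at hp ⊢
    refine ⟨swap_val_lt i j p hi hj hp.1, ?_⟩
    rw [Equiv.swap_apply_self]
    exact hp.2
  · intro p _; exact Equiv.swap_apply_self i j p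
  · intro p _; exact Equiv.swap_apply_self i j p

lemma cnt_zero {n t : ℕ} (u : Fin n → ℕ) : cnt n 0 t u = 0 := by
  unfold cnt
  simp

lemma countP_take_ofFn {n : ℕ} (u : Fin n → ℕ) (t : ℕ) :
    ∀ k, k ≤ n → ((List.ofFn u).take k).countP (fun m => decide (t ≤ m)) = cnt n k t u := by
  intro k
  induction k with
  | zero => intro _; simp [cnt_zero]
  | succ k ih =>
    intro hk
    have hkn : k < n := hk
    rw [List.take_succ, List.countP_append, ih (le_of_lt hkn), cnt_succ u hkn]
    congr 1
    rw [List.getElem?_ofFn]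
    simp only [List.ofFnNthVal, hkn, dif_pos, Option.toList_some, List.countP_cons,
      List.countP_nil, Nat.zero_add]
    by_cases ht : t ≤ u ⟨k, hkn⟩ <;> simp [ht]

lemma countP_le_of_forall₂ {l m : List ℕ} (h : List.Forall₂ (· ≤ ·) l m) (t : ℕ) :
    l.countP (fun v => decide (t ≤ v)) ≤ m.countP (fun v => decide (t ≤ v)) := by
  induction h with
  | nil => simp
  | @cons a b l' m' hab _ ih =>
    simp only [List.countP_cons]
    by_cases h1 : t ≤ a <;> by_cases h2 : t ≤ b <;> simp [h1, h2] <;> omega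

lemma forall₂_of_counts : ∀ (l m : List ℕ), List.Pairwise (· ≥ ·) l → List.Pairwise (· ≥ ·) m →
    l.length = m.length →
    (∀ t, l.countP (fun v => decide (t ≤ v)) ≤ m.countP (fun v => decide (t ≤ v))) →
    List.Forall₂ (· ≤ ·) l m := by
  intro l
  induction l with
  | nil =>
    intro m _ _ hlen _
    cases m with
    | nil => exact List.Forall₂.nil
    | cons b m' => simp at hlen
  | cons a l ih =>
    intro m hsl hsm hlen hcnt
    cases m with
    | nil => simp at hlen
    | cons b m' =>
      have hsl' := List.pairwise_cons.mp hsl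
      have hsm' := List.pairwise_cons.mp hsm
      have hab : a ≤ b := by
        have h2 : 0 < (b :: m').countP (fun v => decide (a ≤ v)) := by
          have h1 : 0 < (a :: l).countP (fun v => decide (a ≤ v)) := by
            simp [List.countP_cons]
          exact lt_of_lt_of_le h1 (hcnt a)
        obtain ⟨c, hc, hpc⟩ := List.countP_pos_iff.mp h2
        have hac : a ≤ c := by simpa using hpc
        rcases List.mem_cons.mp hc with rfl | hc'
        · exact hac
        · exact le_trans hac (hsm'.1 c hc')
      refine List.Forall₂.cons hab (ih m' hsl'.2 hsm'.2 (Nat.succ_injective hlen) ?_)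
      intro t
      by_cases ht : t ≤ a
      · have htb : t ≤ b := le_trans ht hab
        have := hcnt t
        simp only [List.countP_cons, ht, htb, decide_true, if_pos] at this
        omega
      · have h0 : l.countP (fun v => decide (t ≤ v)) = 0 := by
          rw [List.countP_eq_zero]
          intro c hc
          simp only [decide_eq_true_eq]
          intro htc
          exact ht (le_trans htc (hsl'.1 c hc))
        rw [h0]
        exact Nat.zero_le _

lemma contLE_iff {l m : List ℕ} : contLE l m ↔ (l.length = m.length ∧
    ∀ t, l.countP (fun v => decide (t ≤ v)) ≤ m.countP (fun v => decide (t ≤ v))) := by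
  constructor
  · intro h
    have hlen := h.length_eq
    simp only [sortDesc, List.length_insertionSort] at hlen
    refine ⟨hlen, fun t => ?_⟩
    have := countP_le_of_forall₂ h t
    simp only [sortDesc] at this
    rwa [(List.perm_insertionSort _ l).countP_eq, (List.perm_insertionSort _ m).countP_eq]
      at this
  · rintro ⟨hlen, hcnt⟩
    apply forall₂_of_counts
    · exact List.pairwise_insertionSort _ l
    · exact List.pairwise_insertionSort _ m
    · simpa [sortDesc, List.length_insertionSort] using hlen
    · intro t
      simp only [sortDesc]
      rw [(List.perm_insertionSort _ l).countP_eq, (List.perm_insertionSort _ m).countP_eq]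
      exact hcnt t

lemma deodharLE_iff_DLE (n : ℕ) (x y : Fin n → ℕ) : deodharLE n x y ↔ DLE n x y := by
  constructor
  · intro h k t
    rcases le_or_gt k n with hk | hk
    · have := (contLE_iff.mp (h k hk)).2 t
      rwa [countP_take_ofFn x t k hk, countP_take_ofFn y t k hk] at this
    · rw [cnt_stable x (le_of_lt hk), cnt_stable y (le_of_lt hk)]
      have := (contLE_iff.mp (h n le_rfl)).2 t
      rwa [countP_take_ofFn x t n le_rfl, countP_take_ofFn y t n le_rfl] at this
  · intro h k hk
    rw [contLE_iff]
    refine ⟨by simp, fun t => ?_⟩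
    rw [countP_take_ofFn x t k hk, countP_take_ofFn y t k hk]
    exact h k t

lemma DLE_of_pprStep {n : ℕ} {x y : Fin n → ℕ} (h : pprStep n x y) : DLE n x y := by
  intro k t
  rcases h with ⟨i, hlt, hoff⟩ | ⟨i, j, hij, h1, h2, h3, hoff⟩
  · apply cnt_le_of_pointwise
    intro p _
    rcases eq_or_ne p i with rfl | hp
    · exact le_of_lt hlt
    · exact le_of_eq (hoff p hp)
  · have hijv : i.val < j.val := hij
    rcases le_or_gt k j.val with hk | hk
    · apply cnt_le_of_pointwise
      intro p hp
      have hpj : p ≠ j := by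
        intro hc; subst hc; omega
      rcases eq_or_ne p i with rfl | hpi
      · rw [h1]; exact le_of_lt h3
      · exact le_of_eq (hoff p hpi hpj)
    · have hyx : y = x ∘ (Equiv.swap i j) := by
        funext p
        rcases eq_or_ne p i with rfl | hpi
        · rw [Function.comp_apply, Equiv.swap_apply_left]; exact h1
        rcases eq_or_ne p j with rfl | hpj
        · rw [Function.comp_apply, Equiv.swap_apply_right]; exact h2
        · rw [Function.comp_apply, Equiv.swap_apply_of_ne_of_ne hpi hpj]
          exact (hoff p hpi hpj).symm
      rw [hyx, cnt_swap x i j (lt_trans hijv hk) hk]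

lemma rtg_DLE {n : ℕ} {x y : Fin n → ℕ}
    (h : Relation.ReflTransGen (fun u v => IsRook n u ∧ IsRook n v ∧ pprStep n u v) x y) :
    DLE n x y := by
  induction h with
  | refl => exact fun k t => le_rfl
  | tail _ hstep ih => exact fun k t => le_trans (ih k t) (DLE_of_pprStep hstep.2.2 k t)

lemma lo_eq {n : ℕ} {x y : Fin n → ℕ} (i : Fin n)
    (hpre : ∀ p : Fin n, p.val < i.val → x p = y p) (s : ℕ) :
    (Finset.univ.filter fun p : Fin n => p.val < i.val ∧ s ≤ x p).card
      = (Finset.univ.filter fun p : Fin n => p.val < i.val ∧ s ≤ y p).card := by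
  congr 1
  apply Finset.filter_congr
  intro p _
  constructor
  · rintro ⟨h1, h2⟩; exact ⟨h1, (hpre p h1) ▸ h2⟩
  · rintro ⟨h1, h2⟩; exact ⟨h1, (hpre p h1).symm ▸ h2⟩

lemma cnt_shift {n k t : ℕ} (u w : Fin n → ℕ) (i : Fin n) (hik : i.val < k)
    (hagree : ∀ p : Fin n, p ≠ i → p.val < k → u p = w p) :
    cnt n k t u + (if t ≤ w i then 1 else 0) = cnt n k t w + (if t ≤ u i then 1 else 0) := by
  rw [cnt_split (t := t) u i hik, cnt_split (t := t) w i hik]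
  have hlo : (Finset.univ.filter fun p : Fin n => p.val < i.val ∧ t ≤ u p).card
      = (Finset.univ.filter fun p : Fin n => p.val < i.val ∧ t ≤ w p).card := by
    apply lo_eq
    intro p hp
    exact hagree p (fun hc => by simp [hc] at hp) (lt_trans hp hik)
  have hmid : (Finset.univ.filter fun p : Fin n => i.val < p.val ∧ p.val < k ∧ t ≤ u p).card
      = (Finset.univ.filter fun p : Fin n => i.val < p.val ∧ p.val < k ∧ t ≤ w p).card := by
    congr 1
    apply Finset.filter_congr
    intro p _
    have key : ∀ (h1 : i.val < p.val) (h2 : p.val < k), u p = w p := by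
      intro h1 h2
      exact hagree p (fun hc => by simp [hc] at h1) h2
    constructor
    · rintro ⟨h1, h2, h3⟩; exact ⟨h1, h2, (key h1 h2) ▸ h3⟩
    · rintro ⟨h1, h2, h3⟩; exact ⟨h1, h2, (key h1 h2).symm ▸ h3⟩
  omega

/-- The key comparison lemma. -/
lemma key_lt {n : ℕ} {x y : Fin n → ℕ} (hxy : DLE n x y) (i : Fin n)
    (hpre : ∀ p : Fin n, p.val < i.val → x p = y p) {k t : ℕ} (hik : i.val < k)
    (hta : x i < t) (htb : t ≤ y i)
    (H : ∀ p : Fin n, i.val < p.val → p.val < k → x i < x p → y i < x p) :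
    cnt n k t x < cnt n k t y := by
  have hsx := cnt_split (t := t) x i hik
  have hsy := cnt_split (t := t) y i hik
  have hsx' := cnt_split (t := y i + 1) x i hik
  have hsy' := cnt_split (t := y i + 1) y i hik
  rw [if_neg (not_le.mpr hta)] at hsx
  rw [if_pos htb] at hsy
  rw [if_neg (by omega : ¬ y i + 1 ≤ x i)] at hsx'
  rw [if_neg (by omega : ¬ y i + 1 ≤ y i)] at hsy'
  have hlo1 := lo_eq i hpre t
  have hlo2 := lo_eq i hpre (y i + 1)
  have hmidx : (Finset.univ.filter fun p : Fin n => i.val < p.val ∧ p.val < k ∧ t ≤ x p).card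
      = (Finset.univ.filter fun p : Fin n => i.val < p.val ∧ p.val < k ∧ y i + 1 ≤ x p).card := by
    congr 1
    apply Finset.filter_congr
    intro p _
    constructor
    · rintro ⟨h1, h2, h3⟩
      refine ⟨h1, h2, ?_⟩
      have := H p h1 h2 (lt_of_lt_of_le hta h3)
      omega
    · rintro ⟨h1, h2, h3⟩
      exact ⟨h1, h2, by omega⟩
  have hmidy : (Finset.univ.filter fun p : Fin n => i.val < p.val ∧ p.val < k ∧ y i + 1 ≤ y p).card
      ≤ (Finset.univ.filter fun p : Fin n => i.val < p.val ∧ p.val < k ∧ t ≤ y p).card := by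
    apply Finset.card_le_card
    intro p hp
    simp only [Finset.mem_filter, Finset.mem_univ, true_and] at hp ⊢
    exact ⟨hp.1, hp.2.1, by omega⟩
  have hD := hxy k (y i + 1)
  omega

lemma exists_step {n : ℕ} {x y : Fin n → ℕ} (hx : IsRook n x) (hy : IsRook n y)
    (hxy : DLE n x y) (hne : x ≠ y) :
    ∃ z : Fin n → ℕ, IsRook n z ∧ pprStep n x z ∧ DLE n z y ∧
      ∃ k0 t0 : ℕ, k0 ≤ n ∧ t0 ≤ n ∧ cnt n k0 t0 x < cnt n k0 t0 z := by
  classical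
  have hDne : (Finset.univ.filter fun p : Fin n => x p ≠ y p).Nonempty := by
    obtain ⟨p, hp⟩ := Function.ne_iff.mp hne
    exact ⟨p, Finset.mem_filter.mpr ⟨Finset.mem_univ _, hp⟩⟩
  set i := (Finset.univ.filter fun p : Fin n => x p ≠ y p).min' hDne with hidef
  have hi : x i ≠ y i :=
    (Finset.mem_filter.mp ((Finset.univ.filter fun p : Fin n => x p ≠ y p).min'_mem hDne)).2
  have hpre : ∀ p : Fin n, p.val < i.val → x p = y p := by
    intro p hp
    by_contra hc
    have hmem : p ∈ Finset.univ.filter (fun p : Fin n => x p ≠ y p) :=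
      Finset.mem_filter.mpr ⟨Finset.mem_univ _, hc⟩
    have := Finset.min'_le _ p hmem
    rw [← hidef] at this
    have : i.val ≤ p.val := this
    omega
  have hab : x i < y i := by
    rcases lt_trichotomy (x i) (y i) with h | h | h
    · exact h
    · exact absurd h hi
    · exfalso
      have hD := hxy (i.val + 1) (x i)
      have hik : i.val < i.val + 1 := Nat.lt_succ_self _
      rw [cnt_split (t := x i) x i hik, cnt_split (t := x i) y i hik] at hD
      have hmx : (Finset.univ.filter fun p : Fin n =>
          i.val < p.val ∧ p.val < i.val + 1 ∧ x i ≤ x p) = ∅ := by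
        apply Finset.filter_false_of_mem
        intro p _
        rintro ⟨h1, h2, _⟩
        omega
      have hmy : (Finset.univ.filter fun p : Fin n =>
          i.val < p.val ∧ p.val < i.val + 1 ∧ x i ≤ y p) = ∅ := by
        apply Finset.filter_false_of_mem
        intro p _
        rintro ⟨h1, h2, _⟩
        omega
      rw [hmx, hmy, Finset.card_empty, if_pos le_rfl, if_neg (not_le.mpr h)] at hD
      have hlo := lo_eq i hpre (x i)
      omega
  by_cases hJ : ∃ j : Fin n, i < j ∧ x i < x j ∧ x j ≤ y i
  · -- swap case
    have hJne : (Finset.univ.filter fun j : Fin n => i < j ∧ x i < x j ∧ x j ≤ y i).Nonempty := by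
      obtain ⟨j, hj⟩ := hJ
      exact ⟨j, Finset.mem_filter.mpr ⟨Finset.mem_univ _, hj⟩⟩
    set j := (Finset.univ.filter fun j : Fin n => i < j ∧ x i < x j ∧ x j ≤ y i).min' hJne
      with hjdef
    have hj : i < j ∧ x i < x j ∧ x j ≤ y i :=
      (Finset.mem_filter.mp (Finset.min'_mem _ hJne)).2
    have hjmin : ∀ p : Fin n, i < p → p < j → x i < x p → y i < x p := by
      intro p h1 h2 h3
      by_contra hc
      push_neg at hc
      have hmem : p ∈ Finset.univ.filter (fun j : Fin n => i < j ∧ x i < x j ∧ x j ≤ y i) :=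
        Finset.mem_filter.mpr ⟨Finset.mem_univ _, ⟨h1, h3, hc⟩⟩
      have := Finset.min'_le _ p hmem
      rw [← hjdef] at this
      exact absurd this (not_le.mpr h2)
    have hijv : i.val < j.val := hj.1
    refine ⟨x ∘ (Equiv.swap i j), ?_, ?_, ?_, ?_⟩
    · exact ⟨fun p => hx.1 _, fun p q hpq h0 => hx.2 _ _ ((Equiv.swap i j).injective.ne hpq) h0⟩
    · refine Or.inr ⟨i, j, hj.1, ?_, ?_, hj.2.1, ?_⟩
      · rw [Function.comp_apply, Equiv.swap_apply_left]
      · rw [Function.comp_apply, Equiv.swap_apply_right]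
      · intro p hpi hpj
        rw [Function.comp_apply, Equiv.swap_apply_of_ne_of_ne hpi hpj]
    · -- DLE z y
      intro k t
      rcases le_or_gt k i.val with hk | hk
      · have : cnt n k t (x ∘ (Equiv.swap i j)) = cnt n k t x := by
          apply cnt_eq_of_agree
          intro p hp
          rw [Function.comp_apply, Equiv.swap_apply_of_ne_of_ne
            (fun hc => by subst hc; omega) (fun hc => by subst hc; omega)]
        rw [this]
        exact hxy k t
      rcases le_or_gt k j.val with hk2 | hk2
      · -- i < k ≤ j : use shift and key
        have hsh := cnt_shift (t := t) (x ∘ (Equiv.swap i j)) x i hk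
          (fun p hpi hpk => by
            rw [Function.comp_apply, Equiv.swap_apply_of_ne_of_ne hpi
              (fun hc => by subst hc; omega)])
        have hzi : (x ∘ (Equiv.swap i j)) i = x j := by
          rw [Function.comp_apply, Equiv.swap_apply_left]
        rw [hzi] at hsh
        rcases le_or_gt t (x i) with ht | ht
        · rw [if_pos ht, if_pos (le_trans ht (le_of_lt hj.2.1))] at hsh
          have : cnt n k t (x ∘ (Equiv.swap i j)) = cnt n k t x := by omega
          rw [this]; exact hxy k t
        rcases le_or_gt t (x j) with ht2 | ht2
        · rw [if_neg (not_le.mpr ht), if_pos ht2] at hsh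
          have hkey := key_lt hxy i hpre hk ht (le_trans ht2 hj.2.2)
            (fun p h1 h2 h3 => hjmin p h1 (by omega : p.val < j.val) h3)
          omega
        · rw [if_neg (not_le.mpr ht), if_neg (not_le.mpr ht2)] at hsh
          have : cnt n k t (x ∘ (Equiv.swap i j)) = cnt n k t x := by omega
          rw [this]; exact hxy k t
      · rw [cnt_swap x i j (lt_trans hijv hk2) hk2]
        exact hxy k t
    · -- strict cell
      refine ⟨j.val, x j, le_of_lt j.isLt, hx.1 j, ?_⟩
      have hsh := cnt_shift (t := x j) (x ∘ (Equiv.swap i j)) x i hijv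
        (fun p hpi hpk => by
          rw [Function.comp_apply, Equiv.swap_apply_of_ne_of_ne hpi
            (fun hc => by subst hc; omega)])
      have hzi : (x ∘ (Equiv.swap i j)) i = x j := by
        rw [Function.comp_apply, Equiv.swap_apply_left]
      rw [hzi, if_pos le_rfl, if_neg (not_le.mpr hj.2.1)] at hsh
      omega
  · -- raise case
    push_neg at hJ
    have hbnot : ∀ p : Fin n, x p ≠ y i := by
      intro p
      rcases lt_trichotomy p i with h | h | h
      · have hxp : x p = y p := hpre p h
        rw [hxp]
        intro hc
        have hyine : y i ≠ 0 := by omega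
        exact (hy.2 i p (fun hc2 => by subst hc2; exact lt_irrefl _ h) hyine) hc.symm
      · subst h; exact hi
      · intro hc
        have := hJ p h (by omega)
        rw [hc] at this
        omega
    refine ⟨Function.update x i (y i), ?_, ?_, ?_, ?_⟩
    · constructor
      · intro p
        rcases eq_or_ne p i with rfl | hp
        · rw [Function.update_self]; exact hy.1 i
        · rw [Function.update_of_ne hp]; exact hx.1 p
      · intro p q hpq h0
        rcases eq_or_ne p i with rfl | hp
        · rw [Function.update_self]
          rw [Function.update_of_ne (fun hc => hpq hc.symm)]
          exact fun hc => (hbnot q) hc.symm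
        · rw [Function.update_of_ne hp] at h0 ⊢
          rcases eq_or_ne q i with rfl | hq
          · rw [Function.update_self]
            exact hbnot p
          · rw [Function.update_of_ne hq]
            exact hx.2 p q hpq h0
    · refine Or.inl ⟨i, ?_, fun p hp => (Function.update_of_ne hp _ x).symm⟩
      rw [Function.update_self]; exact hab
    · intro k t
      rcases le_or_gt k i.val with hk | hk
      · have : cnt n k t (Function.update x i (y i)) = cnt n k t x := by
          apply cnt_eq_of_agree
          intro p hp
          rw [Function.update_of_ne (fun hc => by subst hc; omega)]
        rw [this]
        exact hxy k t
      · have hsh := cnt_shift (t := t) (Function.update x i (y i)) x i hk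
          (fun p hpi _ => Function.update_of_ne hpi _ x)
        rw [Function.update_self] at hsh
        rcases le_or_gt t (x i) with ht | ht
        · rw [if_pos ht, if_pos (le_trans ht (le_of_lt hab))] at hsh
          have : cnt n k t (Function.update x i (y i)) = cnt n k t x := by omega
          rw [this]; exact hxy k t
        rcases le_or_gt t (y i) with ht2 | ht2
        · rw [if_neg (not_le.mpr ht), if_pos ht2] at hsh
          have hkey := key_lt hxy i hpre hk ht ht2
            (fun p h1 _ h3 => hJ p h1 h3)
          omega
        · rw [if_neg (not_le.mpr ht), if_neg (not_le.mpr ht2)] at hsh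
          have : cnt n k t (Function.update x i (y i)) = cnt n k t x := by omega
          rw [this]; exact hxy k t
    · refine ⟨i.val + 1, y i, i.isLt, hy.1 i, ?_⟩
      have hsh := cnt_shift (t := y i) (Function.update x i (y i)) x i
        (by omega : i.val < i.val + 1)
        (fun p hpi _ => Function.update_of_ne hpi _ x)
      rw [Function.update_self, if_pos le_rfl, if_neg (not_le.mpr hab)] at hsh
      omega

/-- The measure used for induction. -/
def Meas (n : ℕ) (x y : Fin n → ℕ) : ℕ :=
  ∑ p ∈ (Finset.range (n+1)) ×ˢ (Finset.range (n+1)), (cnt n p.1 p.2 y - cnt n p.1 p.2 x)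

lemma Meas_lt {n : ℕ} {x z y : Fin n → ℕ} (hxz : DLE n x z) (hzy : DLE n z y)
    {k0 t0 : ℕ} (hk0 : k0 ≤ n) (ht0 : t0 ≤ n) (hstrict : cnt n k0 t0 x < cnt n k0 t0 z) :
    Meas n z y < Meas n x y := by
  apply Finset.sum_lt_sum
  · intro p _
    exact Nat.sub_le_sub_left (hxz p.1 p.2) _
  · refine ⟨(k0, t0), ?_, ?_⟩
    · rw [Finset.mem_product]
      exact ⟨Finset.mem_range.mpr (by omega), Finset.mem_range.mpr (by omega)⟩
    · have h1 := hzy k0 t0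
      have h2 := hxz k0 t0
      simp only
      omega

lemma backward_aux {n : ℕ} {y : Fin n → ℕ} (hy : IsRook n y) :
    ∀ N : ℕ, ∀ x : Fin n → ℕ, IsRook n x → DLE n x y → Meas n x y ≤ N →
      Relation.ReflTransGen (fun u v => IsRook n u ∧ IsRook n v ∧ pprStep n u v) x y := by
  intro N
  induction N using Nat.strong_induction_on with
  | _ N ih =>
    intro x hx hxy hM
    by_cases hne : x = y
    · subst hne; exact Relation.ReflTransGen.refl
    · obtain ⟨z, hz, hstep, hzy, k0, t0, hk0, ht0, hstrict⟩ := exists_step hx hy hxy hne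
      have hxz : DLE n x z := DLE_of_pprStep hstep
      have hlt : Meas n z y < Meas n x y := Meas_lt hxz hzy hk0 ht0 hstrict
      have htail := ih (Meas n z y) (by omega) z hz hzy le_rfl
      exact Relation.ReflTransGen.head ⟨hx, hz, hstep⟩ htail

theorem ppr_eq_deodhar (n : ℕ) (x y : Fin n → ℕ) (hx : IsRook n x) (hy : IsRook n y) :
    Relation.ReflTransGen (fun u v => IsRook n u ∧ IsRook n v ∧ pprStep n u v) x y ↔
      deodharLE n x y := by
  constructor
  · intro h
    rw [deodharLE_iff_DLE]
    exact rtg_DLE h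
  · intro h
    exact backward_aux hy (Meas n x y) x hx ((deodharLE_iff_DLE n x y).mp h) le_rfl
end
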